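/- The history state Hamiltonian H_prop on C^{T+1}⊗H (with unitaries U_1,...,U_T on H) is unitarily equivalent to Δ⊗1_H, where Δ is the graph Laplacian of the path graph on T+1 vertices; explicitly, the unitary W := Σ_{t=0}^{T} |t⟩⟨t| ⊗ (U_t···U_1)† satisfies W H_prop W† = Δ⊗1_H. -/
import Mathlib


open Matrix Kronecker

variable {T : ℕ} {ι : Type*} [Fintype ι] [DecidableEq ι]

/-- The partial product `U_k ⋯ U_1` of the circuit unitaries (`U_0` interpreted as `1`). -/
noncomputable def prodU (U : Fin T → Matrix ι ι ℂ) : ℕ → Matrix ι ι ℂ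
  | 0 => 1
  | k + 1 => (if h : k < T then U ⟨k, h⟩ else 1) * prodU U k

/-- The vector `|t⟩⊗|j⟩ − |t+1⟩⊗U_{t+1}|j⟩` on `ℂ^{T+1} ⊗ H`. -/
noncomputable def histVec (U : Fin T → Matrix ι ι ℂ) (t : Fin T) (j : ι) :
    Fin (T + 1) × ι → ℂ :=
  fun p =>
    (if p.1 = t.castSucc then (if p.2 = j then 1 else 0) else 0) -
      (if p.1 = t.succ then (U t).mulVec (fun y => if y = j then 1 else 0) p.2 else 0)

/-- `H_prop := Σ_{t=0}^{T−1}(|t⟩⊗1 − |t+1⟩⊗U_{t+1})(⟨t|⊗1 − ⟨t+1|⊗U_{t+1}†)`. -/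
noncomputable def Hprop (U : Fin T → Matrix ι ι ℂ) :
    Matrix (Fin (T + 1) × ι) (Fin (T + 1) × ι) ℂ :=
  ∑ t : Fin T, ∑ j : ι, Matrix.vecMulVec (histVec U t j) (star (histVec U t j))

/-- The graph Laplacian of the path graph on `T+1` vertices `0,…,T`. -/
noncomputable def pathLaplacian (T : ℕ) : Matrix (Fin (T + 1)) (Fin (T + 1)) ℂ :=
  fun s t =>
    if s = t then (if (s : ℕ) = 0 ∨ (s : ℕ) = T then 1 else 2)
    else if (s : ℕ) + 1 = (t : ℕ) ∨ (t : ℕ) + 1 = (s : ℕ) then -1 else 0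

/-- The unitary `W := Σ_{t=0}^{T} |t⟩⟨t| ⊗ (U_t⋯U_1)†`. -/
noncomputable def Wconj (U : Fin T → Matrix ι ι ℂ) :
    Matrix (Fin (T + 1) × ι) (Fin (T + 1) × ι) ℂ :=
  fun p q => if p.1 = q.1 then ((prodU U (p.1 : ℕ))ᴴ) p.2 q.2 else 0


section Aux

variable {T : ℕ} {ι : Type*} [Fintype ι] [DecidableEq ι]

lemma prodU_mem (U : Fin T → Matrix ι ι ℂ) (hU : ∀ t, U t ∈ Matrix.unitaryGroup ι ℂ) :
    ∀ k, prodU U k ∈ Matrix.unitaryGroup ι ℂ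
  | 0 => by rw [prodU]; exact one_mem _
  | (k+1) => by
      rw [prodU]
      split
      · exact mul_mem (hU _) (prodU_mem U hU k)
      · rw [one_mul]; exact prodU_mem U hU k

lemma conjTranspose_mul_self_of_mem {A : Matrix ι ι ℂ} (h : A ∈ Matrix.unitaryGroup ι ℂ) :
    Aᴴ * A = 1 := by
  have := Matrix.mem_unitaryGroup_iff'.mp h
  rwa [Matrix.star_eq_conjTranspose] at this

lemma W_mul_Wh (U : Fin T → Matrix ι ι ℂ) (hU : ∀ t, U t ∈ Matrix.unitaryGroup ι ℂ) :
    Wconj U * (Wconj U)ᴴ = 1 := by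
  ext ⟨s, i⟩ ⟨t, k⟩
  rw [mul_apply, Fintype.sum_prod_type]
  simp only [Wconj, conjTranspose_apply, apply_ite star, star_zero, ite_mul, mul_ite,
    zero_mul, mul_zero, Finset.sum_ite_eq, Finset.mem_univ, if_true,
    Finset.sum_ite_irrel, Finset.sum_const_zero, star_star]
  by_cases h : s = t
  · subst h
    simp only [if_pos rfl]
    have h1 := congrFun (congrFun (conjTranspose_mul_self_of_mem (prodU_mem U hU (s:ℕ))) i) k
    rw [mul_apply] at h1
    simp only [conjTranspose_apply] at h1
    rw [h1]
    simp [one_apply, Prod.ext_iff]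
  · simp [h, Ne.symm h, one_apply, Prod.ext_iff]

lemma conj_vecMulVec {n : Type*} [Fintype n] (W : Matrix n n ℂ) (v : n → ℂ) :
    W * Matrix.vecMulVec v (star v) * Wᴴ =
      Matrix.vecMulVec (W.mulVec v) (star (W.mulVec v)) := by
  ext i j
  simp only [Matrix.mul_apply, Matrix.vecMulVec_apply, Matrix.conjTranspose_apply,
    Matrix.mulVec, dotProduct, Pi.star_apply, star_sum, star_mul', star_star,
    Finset.sum_mul, Finset.mul_sum]
  refine Finset.sum_congr rfl fun q _ => Finset.sum_congr rfl fun p _ => ?_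
  ring

/-- The vector `|t⟩ − |t+1⟩` on `ℂ^{T+1}`. -/
noncomputable def gv {T : ℕ} (τ : Fin T) : Fin (T + 1) → ℂ :=
  fun s => (if s = τ.castSucc then 1 else 0) - (if s = τ.succ then 1 else 0)

lemma prodU_succ_conjT_mul (U : Fin T → Matrix ι ι ℂ)
    (hU : ∀ t, U t ∈ Matrix.unitaryGroup ι ℂ) (τ : Fin T) :
    (prodU U ((τ : ℕ) + 1))ᴴ * U τ = (prodU U (τ : ℕ))ᴴ := by
  have h1 : prodU U ((τ : ℕ) + 1) = U τ * prodU U (τ : ℕ) := by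
    rw [prodU, dif_pos τ.isLt, Fin.eta]
  rw [h1, Matrix.conjTranspose_mul, Matrix.mul_assoc,
    conjTranspose_mul_self_of_mem (hU τ), mul_one]

lemma W_mulVec_histVec (U : Fin T → Matrix ι ι ℂ)
    (hU : ∀ t, U t ∈ Matrix.unitaryGroup ι ℂ) (τ : Fin T) (j : ι) :
    (Wconj U).mulVec (histVec U τ j) = fun p =>
      gv τ p.1 * ((prodU U (τ : ℕ))ᴴ.mulVec (fun y => if y = j then 1 else 0)) p.2 := by
  funext p
  obtain ⟨p1, p2⟩ := p
  rw [Matrix.mulVec, dotProduct, Fintype.sum_prod_type]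
  simp only [Wconj, histVec, ite_mul, zero_mul, mul_ite, mul_zero,
    Finset.sum_ite_irrel, Finset.sum_const_zero, Finset.sum_ite_eq, Finset.mem_univ, if_true]
  simp only [gv, mul_sub, Finset.sum_sub_distrib, sub_mul, one_mul, zero_mul]
  congr 1
  · by_cases h : p1 = τ.castSucc
    · subst h
      simp [Fin.coe_castSucc, Matrix.mulVec, dotProduct]
    · simp [h]
  · by_cases h : p1 = τ.succ
    · subst h
      simp only [if_pos rfl, Fin.val_succ, eq_self_iff_true, if_true, one_mul]
      calc ∑ q2 : ι, ((prodU U ((τ:ℕ) + 1))ᴴ) p2 q2 *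
              (U τ).mulVec (fun y => if y = j then 1 else 0) q2
          = ((prodU U ((τ:ℕ) + 1))ᴴ *ᵥ ((U τ) *ᵥ (fun y => if y = j then 1 else 0))) p2 := rfl
        _ = (((prodU U ((τ:ℕ) + 1))ᴴ * U τ) *ᵥ (fun y => if y = j then 1 else 0)) p2 := by
              rw [Matrix.mulVec_mulVec]
        _ = ((prodU U (τ:ℕ))ᴴ *ᵥ (fun y => if y = j then 1 else 0)) p2 := by
              rw [prodU_succ_conjT_mul U hU τ]
    · simp [h]

lemma vecMulVec_factor {n m : Type*} (g : n → ℂ) (w : m → ℂ) :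
    Matrix.vecMulVec (fun p : n × m => g p.1 * w p.2) (star fun p : n × m => g p.1 * w p.2) =
      (Matrix.vecMulVec g (star g)) ⊗ₖ (Matrix.vecMulVec w (star w)) := by
  ext ⟨a, b⟩ ⟨c, d⟩
  simp only [Matrix.vecMulVec_apply, Matrix.kroneckerMap_apply, Pi.star_apply, star_mul']
  ring

lemma sum_vecMulVec_mulVec_single (A : Matrix ι ι ℂ) :
    ∑ j : ι, Matrix.vecMulVec (A.mulVec (fun y => if y = j then 1 else 0))
        (star (A.mulVec (fun y => if y = j then 1 else 0))) = A * Aᴴ := by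
  ext i k
  simp only [Matrix.sum_apply, Matrix.vecMulVec_apply, Matrix.mulVec, dotProduct,
    Pi.star_apply, mul_ite, mul_one, mul_zero, Finset.sum_ite_eq', Finset.mem_univ, if_true,
    star_sum, Matrix.mul_apply, Matrix.conjTranspose_apply]

lemma sum_kron_left {N : Type*} [Fintype N] {n m p q : Type*} (s : Finset N)
    (A : N → Matrix n m ℂ) (B : Matrix p q ℂ) :
    ∑ i ∈ s, (A i) ⊗ₖ B = (∑ i ∈ s, A i) ⊗ₖ B := by
  ext ⟨a, b⟩ ⟨c, d⟩
  simp [Matrix.sum_apply, Matrix.kroneckerMap_apply, Finset.sum_mul]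

lemma sum_kron_right {N : Type*} [Fintype N] {n m p q : Type*} (s : Finset N)
    (A : Matrix n m ℂ) (B : N → Matrix p q ℂ) :
    ∑ i ∈ s, A ⊗ₖ (B i) = A ⊗ₖ (∑ i ∈ s, B i) := by
  ext ⟨a, b⟩ ⟨c, d⟩
  simp [Matrix.sum_apply, Matrix.kroneckerMap_apply, Finset.mul_sum]

lemma S1 (M a b : ℕ) : ∑ n ∈ Finset.range M,
    (if a = n then (1:ℂ) else 0) * (if b = n then 1 else 0) =
    if a = b ∧ a < M then 1 else 0 := by
  induction M with
  | zero => simp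
  | succ M ih => rw [Finset.sum_range_succ, ih]; split_ifs <;> (try (exfalso; omega)) <;> norm_num

lemma S2 (M a b : ℕ) : ∑ n ∈ Finset.range M,
    (if a = n then (1:ℂ) else 0) * (if b = n + 1 then 1 else 0) =
    if b = a + 1 ∧ a < M then 1 else 0 := by
  induction M with
  | zero => simp
  | succ M ih => rw [Finset.sum_range_succ, ih]; split_ifs <;> (try (exfalso; omega)) <;> norm_num

lemma S4 (M a b : ℕ) : ∑ n ∈ Finset.range M,
    (if a = n + 1 then (1:ℂ) else 0) * (if b = n + 1 then 1 else 0) =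
    if a = b ∧ 1 ≤ a ∧ a < M + 1 then 1 else 0 := by
  induction M with
  | zero =>
      have h : ¬(a = b ∧ 1 ≤ a ∧ a < 0 + 1) := by omega
      rw [Finset.sum_range_zero, if_neg h]
  | succ M ih => rw [Finset.sum_range_succ, ih]; split_ifs <;> (try (exfalso; omega)) <;> norm_num

lemma sum_gv_eq_pathLaplacian (hT : 1 ≤ T) :
    ∑ τ : Fin T, Matrix.vecMulVec (gv τ) (star (gv τ)) = pathLaplacian T := by
  ext s t
  have hstar : ∀ τ : Fin T, star (gv τ) t = gv τ t := by
    intro τ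
    simp [gv, star_sub, apply_ite (star : ℂ → ℂ)]
  simp only [Matrix.sum_apply, Matrix.vecMulVec_apply, hstar]
  have hg : ∀ τ : Fin T, gv τ s * gv τ t =
      ((if (s:ℕ) = (τ:ℕ) then 1 else 0) - (if (s:ℕ) = (τ:ℕ)+1 then (1:ℂ) else 0)) *
      ((if (t:ℕ) = (τ:ℕ) then 1 else 0) - (if (t:ℕ) = (τ:ℕ)+1 then 1 else 0)) := by
    intro τ
    simp [gv, Fin.ext_iff]
  rw [Finset.sum_congr rfl (fun τ _ => hg τ),
    Fin.sum_univ_eq_sum_range (fun n =>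
      ((if (s:ℕ) = n then 1 else 0) - (if (s:ℕ) = n+1 then (1:ℂ) else 0)) *
      ((if (t:ℕ) = n then 1 else 0) - (if (t:ℕ) = n+1 then 1 else 0))) T]
  have expand : ∀ n ∈ Finset.range T,
      ((if (s:ℕ) = n then 1 else 0) - (if (s:ℕ) = n+1 then (1:ℂ) else 0)) *
      ((if (t:ℕ) = n then 1 else 0) - (if (t:ℕ) = n+1 then 1 else 0)) =
      (if (s:ℕ) = n then (1:ℂ) else 0) * (if (t:ℕ) = n then 1 else 0)
      - (if (s:ℕ) = n then (1:ℂ) else 0) * (if (t:ℕ) = n+1 then 1 else 0)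
      - (if (t:ℕ) = n then (1:ℂ) else 0) * (if (s:ℕ) = n+1 then 1 else 0)
      + (if (s:ℕ) = n+1 then (1:ℂ) else 0) * (if (t:ℕ) = n+1 then 1 else 0) := by
    intro n _; ring
  rw [Finset.sum_congr rfl expand]
  simp only [Finset.sum_add_distrib, Finset.sum_sub_distrib]
  have h3 : ∑ n ∈ Finset.range T,
      (if (t:ℕ) = n then (1:ℂ) else 0) * (if (s:ℕ) = n+1 then 1 else 0) =
      if (s:ℕ) = (t:ℕ) + 1 ∧ (t:ℕ) < T then 1 else 0 := S2 T t s
  rw [S1, S2, h3, S4, pathLaplacian]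
  have hs := s.isLt
  have ht := t.isLt
  have hfin : (s = t) ↔ ((s:ℕ) = (t:ℕ)) := Fin.ext_iff
  simp only [hfin]
  split_ifs <;> (try (exfalso; omega)) <;> norm_num

end Aux

/-- The history state Hamiltonian is unitarily equivalent to `Δ ⊗ 1_H`, where `Δ` is the
path-graph Laplacian on `T+1` vertices: explicitly, `W` is unitary and
`W H_prop W† = Δ ⊗ 1`. -/
theorem Hprop_unitarily_equiv_pathLaplacian (hT : 1 ≤ T)
    (U : Fin T → Matrix ι ι ℂ) (hU : ∀ t, U t ∈ Matrix.unitaryGroup ι ℂ) :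
    Wconj U ∈ Matrix.unitaryGroup (Fin (T + 1) × ι) ℂ ∧
      Wconj U * Hprop U * (Wconj U)ᴴ =
        (pathLaplacian T) ⊗ₖ (1 : Matrix ι ι ℂ) := by
  constructor
  · rw [Matrix.mem_unitaryGroup_iff, Matrix.star_eq_conjTranspose]
    exact W_mul_Wh U hU
  · rw [Hprop, Finset.mul_sum, Finset.sum_mul]
    have step : ∀ τ : Fin T,
        Wconj U * (∑ j : ι, Matrix.vecMulVec (histVec U τ j) (star (histVec U τ j))) *
            (Wconj U)ᴴ =
          Matrix.vecMulVec (gv τ) (star (gv τ)) ⊗ₖ (1 : Matrix ι ι ℂ) := by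
      intro τ
      rw [Finset.mul_sum, Finset.sum_mul]
      have term : ∀ j : ι,
          Wconj U * Matrix.vecMulVec (histVec U τ j) (star (histVec U τ j)) * (Wconj U)ᴴ =
            Matrix.vecMulVec (gv τ) (star (gv τ)) ⊗ₖ
              Matrix.vecMulVec ((prodU U (τ:ℕ))ᴴ.mulVec (fun y => if y = j then 1 else 0))
                (star ((prodU U (τ:ℕ))ᴴ.mulVec (fun y => if y = j then 1 else 0))) := by
        intro j
        rw [conj_vecMulVec, W_mulVec_histVec U hU τ j, vecMulVec_factor]
      rw [Finset.sum_congr rfl (fun j _ => term j), sum_kron_right]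
      rw [sum_vecMulVec_mulVec_single, Matrix.conjTranspose_conjTranspose,
        conjTranspose_mul_self_of_mem (prodU_mem U hU _)]
    rw [Finset.sum_congr rfl (fun τ _ => step τ), sum_kron_left,
      sum_gv_eq_pathLaplacian hT]
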